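/- Integral lemma: for non-negative integers β_0,...,β_{N−1}, ∫_{x ∈ ℝ^N_{≥0}, Σ_j x_j = 1} Δ(x) · ∏_j x_j^{β_j} (with respect to the δ(Σ x_j − 1) surface measure) equals (∏_j β_j!) · Δ(β) / (Σ_j β_j + L_N + N − 1)!, where L_N = N(N−1)/2 and Δ(x) = ∏_{i<j}(x_j − x_i). Equivalently, after integrating out x_{N−1}, the integral of Δ(x)∏ x_j^{β_j} over the simplex {x ∈ ℝ^{N−1}_{≥0} : Σ x_j ≤ 1} with x_{N−1} := 1 − Σ_{j<N−1} x_j has this value. -/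

import Mathlib

/-!
Expanding the Vandermonde determinant `det (x_i ^ j)` over permutations turns the integrand into a
signed sum of monomials `∏ x_j ^ (β_j + σ j)`. Each of them is a Dirichlet integral over the simplex,
`∫ ∏ x_j ^ a_j = ∏ a_j! / (∑ a_j + N - 1)!`, proved by integrating out one coordinate at a time
with the Beta integral. The exponent sum `∑ β_j + L_N` does not depend on `σ`, so what is left is
`det ((β_i + j)!) = ∏ β_i! · det (ascPochhammer j (β_i + 1))`, and a matrix of monic polynomials of
degrees `0, …, N - 1` evaluated at points has the Vandermonde determinant of those points.
-/

open MeasureTheory Finset Nat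

theorem integral_pow_mul_sub_pow_succ (p q : ℕ) (s : ℝ) :
    ∫ t in (0 : ℝ)..s, t ^ p * (s - t) ^ (q + 1)
      = (q + 1) / (p + 1) * ∫ t in (0 : ℝ)..s, t ^ (p + 1) * (s - t) ^ q := by
  have hu : ∀ t ∈ Set.uIcc (0 : ℝ) s,
      HasDerivAt (fun t => (s - t) ^ (q + 1)) ((q + 1 : ℕ) * (s - t) ^ q * (-1)) t :=
    fun t _ => ((hasDerivAt_id t).const_sub s).pow (q + 1)
  have hv : ∀ t ∈ Set.uIcc (0 : ℝ) s,
      HasDerivAt (fun t : ℝ => t ^ (p + 1) / ((p + 1 : ℕ) : ℝ)) (t ^ p) t := by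
    intro t _
    refine ((hasDerivAt_pow (p + 1) t).div_const _).congr_deriv ?_
    rw [Nat.add_sub_cancel, mul_div_cancel_left₀ _ (by positivity)]
  have hparts := intervalIntegral.integral_mul_deriv_eq_deriv_mul hu hv
    (by apply Continuous.intervalIntegrable; fun_prop)
    (by apply Continuous.intervalIntegrable; fun_prop)
  simp only [mul_comm (_ ^ p), hparts, sub_self, zero_pow (succ_ne_zero _), zero_mul, sub_zero,
    zero_sub, zero_div, mul_zero, ← intervalIntegral.integral_neg,
    ← intervalIntegral.integral_const_mul]
  refine intervalIntegral.integral_congr fun t _ => ?_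
  push_cast
  field_simp

theorem integral_pow_mul_sub_pow (p q : ℕ) (s : ℝ) :
    ∫ t in (0 : ℝ)..s, t ^ p * (s - t) ^ q
      = (p ! * q ! / (p + q + 1)! : ℝ) * s ^ (p + q + 1) := by
  induction q generalizing p with
  | zero =>
    simp only [pow_zero, mul_one, integral_pow, add_zero, factorial_zero, cast_one,
      factorial_succ, cast_mul]
    push_cast
    field_simp
    ring
  | succ q ih =>
    rw [integral_pow_mul_sub_pow_succ, ih, show p + 1 + q + 1 = p + (q + 1) + 1 by ring,
      factorial_succ p, factorial_succ q]
    push_cast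
    field_simp

theorem det_factorial_add {N : ℕ} (β : Fin N → ℕ) :
    (Matrix.of fun i j : Fin N => ((β i + j)! : ℝ)).det
      = (∏ i, ((β i)! : ℝ)) * ∏ i, ∏ j ∈ Ioi i, ((β j : ℝ) - β i) := by
  have hpoch : ∀ i j : Fin N, ((β i + j)! : ℝ)
      = (β i)! * (ascPochhammer ℝ j).eval ((β i + 1 : ℕ) : ℝ) := by
    intro i j
    rw [ascPochhammer_nat_eq_natCast_ascFactorial, ← Nat.cast_mul,
      Nat.factorial_mul_ascFactorial]
  simp_rw [hpoch]
  refine (Matrix.det_mul_column _ (Matrix.of fun i j : Fin N =>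
    (ascPochhammer ℝ j).eval ((β i + 1 : ℕ) : ℝ))).trans ?_
  rw [← Matrix.det_eval_matrixOfPolynomials_eq_det_vandermonde _ _
    (fun j => ascPochhammer_natDegree ℝ j) (fun j => monic_ascPochhammer ℝ j),
    Matrix.det_vandermonde]
  push_cast
  simp only [add_sub_add_right_eq_sub]

theorem det_vandermonde_mul_prod_pow {R : Type*} [CommRing R] {N : ℕ} (v : Fin N → R)
    (β : Fin N → ℕ) :
    (∏ i, ∏ j ∈ Ioi i, (v j - v i)) * ∏ j, v j ^ β j
      = ∑ σ : Equiv.Perm (Fin N), (Equiv.Perm.sign σ : R) * ∏ j, v j ^ (β j + σ j) := by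
  rw [← Matrix.det_vandermonde, ← Matrix.det_transpose, Matrix.det_apply, Finset.sum_mul]
  refine Finset.sum_congr rfl fun σ _ => ?_
  simp only [Matrix.transpose_apply, Matrix.vandermonde_apply, Units.smul_def, zsmul_eq_mul,
    pow_add, Finset.prod_mul_distrib]
  ring

def cornerSimplex (n : ℕ) : Set (Fin n → ℝ) := {x | (∀ j, 0 ≤ x j) ∧ ∑ j, x j ≤ 1}

theorem isCompact_cornerSimplex (n : ℕ) : IsCompact (cornerSimplex n) := by
  have hclosed : IsClosed (cornerSimplex n) := by
    simp only [cornerSimplex, Set.ofPred_and, Set.ofPred_forall]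
    exact (isClosed_iInter fun j => isClosed_le continuous_const (continuous_apply j)).inter
      (isClosed_le (by fun_prop) continuous_const)
  refine (isCompact_Icc (a := 0) (b := 1)).of_isClosed_subset hclosed fun x ⟨hx0, hx1⟩ => ?_
  exact ⟨hx0, fun j => (single_le_sum (fun i _ => hx0 i) (mem_univ j)).trans hx1⟩

theorem measurableSet_cornerSimplex (n : ℕ) : MeasurableSet (cornerSimplex n) :=
  (isCompact_cornerSimplex n).isClosed.measurableSet

theorem Continuous.integrableOn_cornerSimplex {n : ℕ} {f : (Fin n → ℝ) → ℝ}
    (hf : Continuous f) : IntegrableOn f (cornerSimplex n) :=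
  hf.continuousOn.integrableOn_compact (isCompact_cornerSimplex n)

theorem snoc_mem_cornerSimplex_iff {n : ℕ} (y : Fin n → ℝ) (t : ℝ) :
    (Fin.snoc y t : Fin (n + 1) → ℝ) ∈ cornerSimplex (n + 1)
      ↔ y ∈ cornerSimplex n ∧ t ∈ Set.Icc 0 (1 - ∑ j, y j) := by
  simp only [cornerSimplex, Set.mem_ofPred_eq, Fin.forall_fin_succ', Fin.snoc_castSucc,
    Fin.snoc_last, Fin.sum_univ_castSucc, Set.mem_Icc]
  constructor
  · rintro ⟨⟨hy, ht⟩, hsum⟩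
    exact ⟨⟨hy, by linarith⟩, ht, by linarith⟩
  · rintro ⟨⟨hy, -⟩, ht, hsum⟩
    exact ⟨⟨hy, ht⟩, by linarith⟩

theorem setIntegral_cornerSimplex_succ {n : ℕ} {g : (Fin (n + 1) → ℝ) → ℝ}
    (hg : IntegrableOn g (cornerSimplex (n + 1))) :
    ∫ x in cornerSimplex (n + 1), g x
      = ∫ y in cornerSimplex n, ∫ t in (0 : ℝ)..(1 - ∑ j, y j), g (Fin.snoc y t) := by
  set e := (MeasurableEquiv.piFinSuccAbove (fun _ => ℝ) (Fin.last n)).symm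
  have he : ∀ p, e p = Fin.snoc p.2 p.1 := fun p => Fin.insertNth_last' p.1 p.2
  have hmp : MeasurePreserving e (volume.prod volume) volume :=
    (volume_preserving_piFinSuccAbove (fun _ => ℝ) (Fin.last n)).symm
  set F := (cornerSimplex (n + 1)).indicator g
  have hF : Integrable (fun p => F (e p)) (volume.prod volume) :=
    (hmp.integrable_comp_emb e.measurableEmbedding).mpr
      ((integrable_indicator_iff (measurableSet_cornerSimplex _)).mpr hg)
  have hsection : ∀ y, ∫ t, F (Fin.snoc y t) = (cornerSimplex n).indicator
      (fun y => ∫ t in (0 : ℝ)..(1 - ∑ j, y j), g (Fin.snoc y t)) y := by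
    intro y
    by_cases hy : y ∈ cornerSimplex n
    · have hsum : 0 ≤ 1 - ∑ j, y j := sub_nonneg.mpr hy.2
      simp only [F, Set.indicator, snoc_mem_cornerSimplex_iff, hy, true_and, if_true]
      rw [intervalIntegral.integral_of_le hsum, ← integral_Icc_eq_integral_Ioc,
        ← integral_indicator measurableSet_Icc]
      simp only [Set.indicator_apply]
    · simp [F, Set.indicator, snoc_mem_cornerSimplex_iff, hy]
  rw [← integral_indicator (measurableSet_cornerSimplex _), ← hmp.integral_comp',
    integral_prod_symm _ hF, ← integral_indicator (measurableSet_cornerSimplex _)]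
  simp only [he, hsection]

theorem integral_cornerSimplex_prod_pow (n : ℕ) (a : Fin (n + 1) → ℕ) :
    ∫ x in cornerSimplex n, ∏ j, (Fin.snoc x (1 - ∑ i, x i) : Fin (n + 1) → ℝ) j ^ a j
      = (∏ j, ((a j)! : ℝ)) / (∑ j, a j + n)! := by
  induction n with
  | zero =>
    have hvol : volume (cornerSimplex 0) = 1 := by
      rw [show cornerSimplex 0 = Set.univ by ext; simp [cornerSimplex], volume_pi,
        Measure.pi_univ, Finset.prod_of_isEmpty]
    simp [Fin.snoc, measureReal_def, hvol, (a 0).factorial_ne_zero]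
  | succ n ih =>
    refine Fin.snocCases (fun a q => Fin.snocCases (fun b p => ?_) a) a
    rw [setIntegral_cornerSimplex_succ (Continuous.integrableOn_cornerSimplex (by fun_prop))]
    simp only [Fin.prod_univ_castSucc, Fin.sum_univ_castSucc, Fin.snoc_castSucc, Fin.snoc_last]
    have hinner : ∀ y : Fin n → ℝ,
        ∫ t in (0 : ℝ)..(1 - ∑ j, y j), (∏ j, y j ^ b j) * t ^ p * (1 - (∑ j, y j + t)) ^ q
          = (p ! * q ! / (p + q + 1)! : ℝ) * ∏ j, (Fin.snoc y (1 - ∑ i, y i) : Fin (n + 1) → ℝ) j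
              ^ (Fin.snoc b (p + q + 1) : Fin (n + 1) → ℕ) j := by
      intro y
      simp only [mul_assoc, ← sub_sub, intervalIntegral.integral_const_mul,
        integral_pow_mul_sub_pow, Fin.prod_univ_castSucc, Fin.snoc_castSucc, Fin.snoc_last]
      ring
    rw [integral_congr_ae (ae_of_all _ hinner), integral_const_mul, ih]
    simp only [Fin.prod_univ_castSucc, Fin.sum_univ_castSucc, Fin.snoc_castSucc, Fin.snoc_last]
    rw [show ∑ j, b j + p + q + (n + 1) = ∑ j, b j + (p + q + 1) + n by ring]
    field_simp

/-- Integral lemma: the integral over the simplex (with the last coordinate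
`x_{N-1} = 1 - ∑ x_j` integrated out via the Dirac delta) of the Vandermonde
product `Δ(x)` times the monomial `∏ x_j^{β_j}` equals
`(∏_j β_j!) Δ(β) / (∑ β_j + L_N + N - 1)!`, where `N = n + 1` and
`L_N = N(N-1)/2`. -/
theorem vandermonde_simplex_moment (n : ℕ) (β : Fin (n + 1) → ℕ) :
    (∫ x in {x : Fin n → ℝ | (∀ j, 0 ≤ x j) ∧ ∑ j, x j ≤ 1},
      (∏ i : Fin (n + 1), ∏ j ∈ Finset.Ioi i,
          ((Fin.snoc x (1 - ∑ j', x j') : Fin (n + 1) → ℝ) j -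
            (Fin.snoc x (1 - ∑ j', x j') : Fin (n + 1) → ℝ) i)) *
        ∏ j : Fin (n + 1), ((Fin.snoc x (1 - ∑ j', x j') : Fin (n + 1) → ℝ) j) ^ β j)
    = (∏ j, ((β j)! : ℝ)) *
        (∏ i : Fin (n + 1), ∏ j ∈ Finset.Ioi i, ((β j : ℝ) - (β i : ℝ))) /
        ((∑ j, β j + (n + 1) * n / 2 + n)! : ℝ) := by
  change ∫ x in cornerSimplex n, _ = _
  have hexponents : ∀ σ : Equiv.Perm (Fin (n + 1)),
      ∑ j, (β j + σ j) = ∑ j, β j + (n + 1) * n / 2 := by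
    intro σ
    rw [sum_add_distrib, Equiv.sum_comp σ (fun j => (j : ℕ)),
      Fin.sum_univ_eq_sum_range (fun i => i), sum_range_id, Nat.add_sub_cancel]
  simp_rw [det_vandermonde_mul_prod_pow]
  rw [integral_finsetSum _ fun σ _ => Continuous.integrableOn_cornerSimplex (by fun_prop)]
  simp_rw [integral_const_mul, integral_cornerSimplex_prod_pow, hexponents, ← mul_div_assoc,
    ← sum_div]
  rw [← det_factorial_add, ← Matrix.det_transpose, Matrix.det_apply]
  simp only [Matrix.transpose_apply, Matrix.of_apply, Units.smul_def, zsmul_eq_mul]
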